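/- For type A_{2n}^{(2)}, the weight set of the level 1 perfect crystal component B(θ) (with g = C_n and θ = α_1 + ... + α_{n-1} + (1/2)α_n) is Λ = {±(α_i + ... + α_{n-1} + (1/2)α_n) : i = 1,...,n-1} ∪ {±(1/2)α_n}, and hence |B(θ)| = 2n and the crystal graph of B = B(θ) ⊔ {∅} with 0-arrows is a single (2n+1)-cycle: x_θ →_1 x_{θ-α_1} →_2 ... →_n x_{-(1/2)α_n} →_{n-1} ... →_1 x_{-θ} →_0 ∅ →_0 x_θ. -/

import Mathlib

namespace LevelOnePerfect

/-- Elements of the level 1 perfect crystal `B = B(θ) ⊔ B(0)`: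
`x a` for weights `a ∈ Λ⁺ ∪ Λ⁻`, `y i` for those `i` with `αᵢ ∈ Λ⁺`, and `empt = ∅`. -/
inductive PC (V : Type*) (ι : Type*) where
  | x : V → PC V ι
  | y : ι → PC V ι
  | empt : PC V ι

variable {V : Type*} [AddCommGroup V] [Module ℝ V] {ι : Type*}

/-- `Λ⁺ ∪ Λ⁻`, the set of nonzero weights of `B(θ)`. -/
def Lpm (Λp : Set V) : Set V := Λp ∪ (-Λp)

/-- The Kashiwara `f̃`-arrows of the crystal `B`; the index `none` is the affine node `0`,
`some i` the classical nodes.  For `i ≠ 0`:  `x_a →ᵢ x_{a - αᵢ}` (when both weights occur) and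
`x_{αᵢ} →ᵢ yᵢ →ᵢ x_{-αᵢ}` (when `αᵢ ∈ Λ⁺`).  For `i = 0`: `x_a →₀ x_{a+θ}` (for `a, a+θ ≠ ±θ`)
and `x_{-θ} →₀ ∅ →₀ x_θ`. -/
def fArrow (Λp : Set V) (θ : V) (sroot : ι → V) :
    Option ι → PC V ι → PC V ι → Prop
  | some i, .x a, .x b => a ∈ Lpm Λp ∧ b ∈ Lpm Λp ∧ b = a - sroot i
  | some i, .x a, .y j => j = i ∧ a = sroot i ∧ sroot i ∈ Λp
  | some i, .y j, .x b => j = i ∧ b = -sroot i ∧ sroot i ∈ Λp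
  | none, .x a, .x b => a ∈ Lpm Λp ∧ b ∈ Lpm Λp ∧ b = a + θ ∧
      a ≠ θ ∧ a ≠ -θ ∧ b ≠ θ ∧ b ≠ -θ
  | none, .x a, .empt => a = -θ
  | none, .empt, .x b => b = θ
  | _, _, _ => False

/-- The underlying set of the crystal `B = B(θ) ⊔ {∅}`. -/
def carrier (Λp : Set V) (sroot : ι → V) : Set (PC V ι) :=
  {p | match p with
      | .x a => a ∈ Lpm Λp
      | .y i => sroot i ∈ Λp
      | .empt => True}

/-- There is a chain of `k` consecutive `ii`-arrows ending at `b` (so `εᵢᵢ(b) ≥ k`). -/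
def chainIn (Λp : Set V) (θ : V) (sroot : ι → V) (ii : Option ι) :
    ℕ → PC V ι → Prop
  | 0, _ => True
  | k + 1, b => ∃ b', fArrow Λp θ sroot ii b' b ∧ chainIn Λp θ sroot ii k b'

/-- There is a chain of `k` consecutive `ii`-arrows starting at `b` (so `φᵢᵢ(b) ≥ k`). -/
def chainOut (Λp : Set V) (θ : V) (sroot : ι → V) (ii : Option ι) :
    ℕ → PC V ι → Prop
  | 0, _ => True
  | k + 1, b => ∃ b', fArrow Λp θ sroot ii b b' ∧ chainOut Λp θ sroot ii k b'

/-- `εᵢᵢ(b)`, the number of `ii`-arrows coming into `b` along a string. -/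
noncomputable def epsN (Λp : Set V) (θ : V) (sroot : ι → V) (ii : Option ι) (b : PC V ι) : ℕ :=
  sSup {k | chainIn Λp θ sroot ii k b}

/-- `φᵢᵢ(b)`, the number of `ii`-arrows emanating from `b` along a string. -/
noncomputable def phiN (Λp : Set V) (θ : V) (sroot : ι → V) (ii : Option ι) (b : PC V ι) : ℕ :=
  sSup {k | chainOut Λp θ sroot ii k b}

/-- The Kashiwara `f̃`-arrows on the tensor product `B ⊗ B`, given by the tensor product rule:
`f̃ᵢ` acts on the first factor if `φᵢ(b₁) > εᵢ(b₂)` and on the second factor otherwise. -/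
def tfArrow (Λp : Set V) (θ : V) (sroot : ι → V) (ii : Option ι)
    (p q : PC V ι × PC V ι) : Prop :=
  (epsN Λp θ sroot ii p.2 < phiN Λp θ sroot ii p.1 ∧
    fArrow Λp θ sroot ii p.1 q.1 ∧ q.2 = p.2) ∨
  (phiN Λp θ sroot ii p.1 ≤ epsN Λp θ sroot ii p.2 ∧
    q.1 = p.1 ∧ fArrow Λp θ sroot ii p.2 q.2)

/-- The (classical) weight of an element of `B`. -/
def wtPC (b : PC V ι) : V := match b with | .x a => a | _ => 0

/-! Type `A₂ₙ⁽²⁾`: here `g = Cₙ`, realized in `ℝⁿ` with `αᵢ = eᵢ - eᵢ₊₁` (`1 ≤ i ≤ n-1`),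
`αₙ = 2eₙ`, and `θ = ϖ₁ = e₁ = α₁ + ⋯ + α_{n-1} + (1/2)αₙ`;
`Λ⁺ = {e₁, …, eₙ}` (indices written `0`-based below). -/

/-- the standard basis vector `eᵢ` -/
noncomputable def A2e (n : ℕ) (i : Fin n) : EuclideanSpace ℝ (Fin n) :=
  EuclideanSpace.single i 1

/-- the simple roots of `Cₙ` -/
noncomputable def A2root (n : ℕ) (i : Fin n) : EuclideanSpace ℝ (Fin n) :=
  if h : (i : ℕ) + 1 < n then A2e n i - A2e n ⟨(i : ℕ) + 1, h⟩ else (2 : ℝ) • A2e n i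

/-- `θ = ϖ₁ = e₁` -/
noncomputable def A2theta (n : ℕ) (hn : 0 < n) : EuclideanSpace ℝ (Fin n) :=
  A2e n ⟨0, hn⟩

/-- `Λ⁺ = {e₁, …, eₙ}` -/
def A2Lp (n : ℕ) : Set (EuclideanSpace ℝ (Fin n)) := Set.range (A2e n)

/-- `αᵢ + αᵢ₊₁ + ⋯ + α_{n-1} + (1/2)αₙ` -/
noncomputable def A2suffix (n : ℕ) (hn : 0 < n) (i : Fin n) : EuclideanSpace ℝ (Fin n) :=
  (∑ j : Fin n, if (i : ℕ) ≤ (j : ℕ) ∧ (j : ℕ) < n - 1 then A2root n j else 0) +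
    ((1 : ℝ) / 2) • A2root n ⟨n - 1, by omega⟩

/-- the `(2n+1)`-cycle: `x_{e₁}, x_{e₂}, …, x_{eₙ}, x_{-eₙ}, …, x_{-e₁}, ∅` -/
noncomputable def A2seq (n : ℕ) (k : ℕ) : PC (EuclideanSpace ℝ (Fin n)) (Fin n) :=
  if h : k < n then PC.x (A2e n ⟨k, h⟩)
  else if h2 : k < 2 * n then PC.x (-(A2e n ⟨2 * n - 1 - k, by omega⟩))
  else PC.empt

/-- the labels `1, 2, …, n, n-1, …, 1, 0, 0` of the arrows along the cycle -/
def A2lab (n : ℕ) (k : ℕ) : Option (Fin n) :=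
  if h : k < n then some ⟨k, h⟩
  else if h2 : k < 2 * n - 1 then some ⟨2 * n - 2 - k, by omega⟩
  else none

/-! ### Auxiliary lemmas -/

section AuxLemmas

lemma A2e_eq {n : ℕ} {j : Fin n} {b : ℕ} (h : (j : ℕ) = b) (hb : b < n) :
    A2e n j = A2e n ⟨b, hb⟩ := by
  subst h
  exact congrArg (A2e n) (Fin.eta j hb).symm

lemma A2e_inj (n : ℕ) : Function.Injective (A2e n) := by
  intro i j h
  have := congrArg (fun v : EuclideanSpace ℝ (Fin n) => v i) h
  simp [A2e, EuclideanSpace.single_apply] at this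
  exact this

lemma A2e_ne_neg (n : ℕ) (i j : Fin n) : A2e n i ≠ -A2e n j := by
  intro h
  have := congrArg (fun v : EuclideanSpace ℝ (Fin n) => v i) h
  simp [A2e, EuclideanSpace.single_apply] at this
  split_ifs at this <;> norm_num at this

lemma mem_Lpm_iff {n : ℕ} (v : EuclideanSpace ℝ (Fin n)) :
    v ∈ Lpm (A2Lp n) ↔ ∃ i : Fin n, v = A2e n i ∨ v = -A2e n i := by
  simp only [Lpm, Set.mem_union, A2Lp, Set.mem_range, Set.mem_neg]
  constructor
  · rintro (⟨i, rfl⟩ | ⟨i, hi⟩)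
    · exact ⟨i, Or.inl rfl⟩
    · exact ⟨i, Or.inr (by rw [hi, neg_neg])⟩
  · rintro ⟨i, rfl | rfl⟩
    · exact Or.inl ⟨i, rfl⟩
    · exact Or.inr ⟨i, by simp⟩

lemma mem_Lpm_e {n : ℕ} (i : Fin n) : A2e n i ∈ Lpm (A2Lp n) :=
  (mem_Lpm_iff _).2 ⟨i, Or.inl rfl⟩

lemma mem_Lpm_neg_e {n : ℕ} (i : Fin n) : -A2e n i ∈ Lpm (A2Lp n) :=
  (mem_Lpm_iff _).2 ⟨i, Or.inr rfl⟩

lemma root_not_mem (n : ℕ) (i : Fin n) (m : Fin n) : A2e n m ≠ A2root n i := by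
  intro h
  by_cases h1 : (i : ℕ) + 1 < n
  · have := congrArg (fun v : EuclideanSpace ℝ (Fin n) => v ⟨(i : ℕ) + 1, h1⟩) h
    rw [A2root, dif_pos h1] at this
    simp [A2e, EuclideanSpace.single_apply, Fin.ext_iff] at this
    split_ifs at this <;> norm_num at this
  · have := congrArg (fun v : EuclideanSpace ℝ (Fin n) => v i) h
    rw [A2root, dif_neg h1] at this
    simp only [A2e, WithLp.ofLp_add, WithLp.ofLp_sub, WithLp.ofLp_neg, WithLp.ofLp_smul,
      Pi.add_apply, Pi.sub_apply, Pi.neg_apply, Pi.smul_apply, PiLp.smul_apply, EuclideanSpace.single_apply, Fin.ext_iff,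
      smul_eq_mul] at this
    split_ifs at this <;> norm_num at this

lemma root_not_mem' (n : ℕ) (i : Fin n) : A2root n i ∉ A2Lp n := by
  rintro ⟨m, hm⟩
  exact root_not_mem n i m hm

lemma cls1 {n : ℕ} {i j k : Fin n} (h : A2e n k = A2e n j - A2root n i) :
    (i : ℕ) + 1 < n ∧ (j : ℕ) = (i : ℕ) ∧ (k : ℕ) = (i : ℕ) + 1 := by
  by_cases h1 : (i : ℕ) + 1 < n
  · rw [A2root, dif_pos h1] at h
    have hi := congrArg (fun v : EuclideanSpace ℝ (Fin n) => v i) h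
    have hi1 := congrArg (fun v : EuclideanSpace ℝ (Fin n) => v ⟨(i : ℕ) + 1, h1⟩) h
    simp only [A2e, WithLp.ofLp_add, WithLp.ofLp_sub, WithLp.ofLp_neg, WithLp.ofLp_smul,
      Pi.add_apply, Pi.sub_apply, Pi.neg_apply, Pi.smul_apply, PiLp.sub_apply, EuclideanSpace.single_apply, Fin.ext_iff, Fin.val_mk] at hi hi1
    refine ⟨h1, ?_⟩
    split_ifs at hi hi1 <;> norm_num at * <;> omega
  · rw [A2root, dif_neg h1] at h
    have hi := congrArg (fun v : EuclideanSpace ℝ (Fin n) => v i) h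
    simp only [A2e, WithLp.ofLp_add, WithLp.ofLp_sub, WithLp.ofLp_neg, WithLp.ofLp_smul,
      Pi.add_apply, Pi.sub_apply, Pi.neg_apply, Pi.smul_apply, PiLp.sub_apply, PiLp.smul_apply, EuclideanSpace.single_apply, Fin.ext_iff,
      smul_eq_mul] at hi
    split_ifs at hi <;> norm_num at hi

lemma cls2 {n : ℕ} {i j k : Fin n} (h : A2e n k = -A2e n j - A2root n i) : False := by
  by_cases h1 : (i : ℕ) + 1 < n
  · rw [A2root, dif_pos h1] at h
    have hi := congrArg (fun v : EuclideanSpace ℝ (Fin n) => v i) h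
    have hi1 := congrArg (fun v : EuclideanSpace ℝ (Fin n) => v ⟨(i : ℕ) + 1, h1⟩) h
    simp only [A2e, WithLp.ofLp_add, WithLp.ofLp_sub, WithLp.ofLp_neg, WithLp.ofLp_smul,
      Pi.add_apply, Pi.sub_apply, Pi.neg_apply, Pi.smul_apply, PiLp.sub_apply, PiLp.neg_apply, EuclideanSpace.single_apply, Fin.ext_iff,
      Fin.val_mk] at hi hi1
    split_ifs at hi hi1 <;> norm_num at * <;> omega
  · rw [A2root, dif_neg h1] at h
    have hk := congrArg (fun v : EuclideanSpace ℝ (Fin n) => v k) h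
    simp only [A2e, WithLp.ofLp_add, WithLp.ofLp_sub, WithLp.ofLp_neg, WithLp.ofLp_smul,
      Pi.add_apply, Pi.sub_apply, Pi.neg_apply, Pi.smul_apply, PiLp.sub_apply, PiLp.neg_apply, PiLp.smul_apply, EuclideanSpace.single_apply,
      Fin.ext_iff, smul_eq_mul] at hk
    split_ifs at hk <;> norm_num at hk

lemma cls3 {n : ℕ} {i j k : Fin n} (h : -A2e n k = A2e n j - A2root n i) :
    ¬((i : ℕ) + 1 < n) ∧ (j : ℕ) = (i : ℕ) ∧ (k : ℕ) = (i : ℕ) := by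
  by_cases h1 : (i : ℕ) + 1 < n
  · rw [A2root, dif_pos h1] at h
    have hi := congrArg (fun v : EuclideanSpace ℝ (Fin n) => v ⟨(i : ℕ) + 1, h1⟩) h
    simp only [A2e, WithLp.ofLp_add, WithLp.ofLp_sub, WithLp.ofLp_neg, WithLp.ofLp_smul,
      Pi.add_apply, Pi.sub_apply, Pi.neg_apply, Pi.smul_apply, PiLp.sub_apply, PiLp.neg_apply, EuclideanSpace.single_apply, Fin.ext_iff,
      Fin.val_mk] at hi
    split_ifs at hi <;> norm_num at hi <;> omega
  · rw [A2root, dif_neg h1] at h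
    have hi := congrArg (fun v : EuclideanSpace ℝ (Fin n) => v i) h
    have hj := congrArg (fun v : EuclideanSpace ℝ (Fin n) => v j) h
    have hk := congrArg (fun v : EuclideanSpace ℝ (Fin n) => v k) h
    simp only [A2e, WithLp.ofLp_add, WithLp.ofLp_sub, WithLp.ofLp_neg, WithLp.ofLp_smul,
      Pi.add_apply, Pi.sub_apply, Pi.neg_apply, Pi.smul_apply, PiLp.sub_apply, PiLp.neg_apply, PiLp.smul_apply, EuclideanSpace.single_apply,
      Fin.ext_iff, smul_eq_mul] at hi hj hk
    refine ⟨h1, ?_⟩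
    split_ifs at hi hj hk <;> norm_num at * <;> omega

lemma cls4 {n : ℕ} {i j k : Fin n} (h : -A2e n k = -A2e n j - A2root n i) :
    (i : ℕ) + 1 < n ∧ (j : ℕ) = (i : ℕ) + 1 ∧ (k : ℕ) = (i : ℕ) := by
  by_cases h1 : (i : ℕ) + 1 < n
  · rw [A2root, dif_pos h1] at h
    have hi := congrArg (fun v : EuclideanSpace ℝ (Fin n) => v i) h
    have hi1 := congrArg (fun v : EuclideanSpace ℝ (Fin n) => v ⟨(i : ℕ) + 1, h1⟩) h
    simp only [A2e, WithLp.ofLp_add, WithLp.ofLp_sub, WithLp.ofLp_neg, WithLp.ofLp_smul,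
      Pi.add_apply, Pi.sub_apply, Pi.neg_apply, Pi.smul_apply, PiLp.sub_apply, PiLp.neg_apply, EuclideanSpace.single_apply, Fin.ext_iff,
      Fin.val_mk] at hi hi1
    refine ⟨h1, ?_⟩
    split_ifs at hi hi1 <;> norm_num at * <;> omega
  · rw [A2root, dif_neg h1] at h
    have hi := congrArg (fun v : EuclideanSpace ℝ (Fin n) => v i) h
    simp only [A2e, WithLp.ofLp_add, WithLp.ofLp_sub, WithLp.ofLp_neg, WithLp.ofLp_smul,
      Pi.add_apply, Pi.sub_apply, Pi.neg_apply, Pi.smul_apply, PiLp.sub_apply, PiLp.neg_apply, PiLp.smul_apply, EuclideanSpace.single_apply,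
      Fin.ext_iff, smul_eq_mul] at hi
    split_ifs at hi <;> norm_num at hi

lemma cls0 {n : ℕ} (hn : 0 < n) {j k : Fin n} {s t : ℝ}
    (hs : s = 1 ∨ s = -1) (ht : t = 1 ∨ t = -1) (hj : (j : ℕ) ≠ 0) (hk : (k : ℕ) ≠ 0)
    (h : t • A2e n k = s • A2e n j + A2e n ⟨0, hn⟩) : False := by
  have h0 := congrArg (fun v : EuclideanSpace ℝ (Fin n) => v ⟨0, hn⟩) h
  simp only [A2e, WithLp.ofLp_add, WithLp.ofLp_sub, WithLp.ofLp_neg, WithLp.ofLp_smul,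
      Pi.add_apply, Pi.sub_apply, Pi.neg_apply, Pi.smul_apply, PiLp.add_apply, PiLp.smul_apply, EuclideanSpace.single_apply, Fin.ext_iff,
    Fin.val_mk, smul_eq_mul] at h0
  rcases hs with rfl | rfl <;> rcases ht with rfl | rfl <;> split_ifs at h0 <;>
    first | omega | norm_num at h0

noncomputable def Ssum (n : ℕ) (i : ℕ) : EuclideanSpace ℝ (Fin n) :=
  ∑ j : Fin n, if i ≤ (j : ℕ) ∧ (j : ℕ) < n - 1 then A2root n j else 0

lemma Ssum_zero (n i : ℕ) (h : n - 1 ≤ i) : Ssum n i = 0 := by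
  apply Finset.sum_eq_zero
  intro j _
  rw [if_neg]
  omega

lemma Ssum_step (n i : ℕ) (h : i < n - 1) :
    Ssum n i = A2root n ⟨i, by omega⟩ + Ssum n (i + 1) := by
  have : Ssum n i - Ssum n (i + 1) = A2root n ⟨i, by omega⟩ := by
    rw [Ssum, Ssum, ← Finset.sum_sub_distrib]
    rw [Finset.sum_congr rfl (g := fun j => if j = (⟨i, by omega⟩ : Fin n) then A2root n j else 0)
      (fun j _ => by
        show _ = if j = (⟨i, by omega⟩ : Fin n) then A2root n j else 0
        rcases eq_or_ne j (⟨i, by omega⟩ : Fin n) with rfl | hne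
        · rw [if_pos rfl, Fin.val_mk, if_pos ⟨le_refl _, h⟩, if_neg (by omega), sub_zero]
        · rw [if_neg hne]
          have hv : (j : ℕ) ≠ i := fun hv => hne (Fin.ext hv)
          split_ifs <;> first | (exfalso; omega) | abel)]
    simp
  linear_combination (norm := abel) this

lemma Ssum_eq (n : ℕ) (hn : 0 < n) (i : Fin n) :
    Ssum n (i : ℕ) = A2e n i - A2e n ⟨n - 1, by omega⟩ := by
  obtain ⟨i, hi⟩ := i
  suffices H : ∀ d i (hi : i < n), n - 1 - i = d →
      Ssum n i = A2e n ⟨i, hi⟩ - A2e n ⟨n - 1, by omega⟩ from H _ i hi rfl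
  intro d
  induction d with
  | zero =>
    intro i hi hd
    have : i = n - 1 := by omega
    subst this
    rw [Ssum_zero n _ le_rfl, sub_self]
  | succ d ih =>
    intro i hi hd
    have h1 : i < n - 1 := by omega
    rw [Ssum_step n i h1, ih (i + 1) (by omega) (by omega)]
    have : A2root n ⟨i, by omega⟩ = A2e n ⟨i, hi⟩ - A2e n ⟨i + 1, by omega⟩ := by
      rw [A2root, dif_pos (show ((⟨i, by omega⟩ : Fin n) : ℕ) + 1 < n by simpa using by omega)]
    rw [this]
    abel

lemma suffix_eq (n : ℕ) (hn : 0 < n) (i : Fin n) : A2suffix n hn i = A2e n i := by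
  have hsum : (∑ j : Fin n, if (i : ℕ) ≤ (j : ℕ) ∧ (j : ℕ) < n - 1 then A2root n j else 0)
      = Ssum n (i : ℕ) := rfl
  rw [A2suffix, hsum, Ssum_eq n hn i,
    A2root, dif_neg (show ¬(n - 1 + 1 < n) by omega), smul_smul]
  norm_num

lemma card_part (n : ℕ) :
    Set.ncard {b | b ∈ carrier (A2Lp n) (A2root n) ∧ b ≠ PC.empt} = 2 * n := by
  have hset : {b | b ∈ carrier (A2Lp n) (A2root n) ∧ b ≠ PC.empt} =
      PC.x '' (Lpm (A2Lp n)) := by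
    ext b
    cases b with
    | x a => simp [carrier, Set.mem_image]
    | y i => simp [carrier, root_not_mem' n i]
    | empt => simp [carrier]
  rw [hset, Set.ncard_image_of_injective _ (fun a b h => by cases h; rfl)]
  have : Lpm (A2Lp n) = Set.range (A2e n) ∪ Set.range (fun i => -A2e n i) := by
    ext v
    rw [mem_Lpm_iff]
    simp only [Set.mem_union, Set.mem_range, eq_comm]
    exact exists_or
  rw [this, Set.ncard_union_eq ?_ (Set.finite_range _) (Set.finite_range _)]
  · have h1 : (Set.range (A2e n)).ncard = n := by
      rw [← Set.image_univ, Set.ncard_image_of_injective _ (A2e_inj n), Set.ncard_univ]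
      simp
    have h2 : (Set.range (fun i => -A2e n i)).ncard = n := by
      rw [← Set.image_univ,
        Set.ncard_image_of_injective _ (fun a b h => A2e_inj n (neg_injective h)),
        Set.ncard_univ]
      simp
    omega
  · rw [Set.disjoint_left]
    rintro v ⟨i, rfl⟩ ⟨j, hj⟩
    exact A2e_ne_neg n i j hj.symm

end AuxLemmas

/-- For type `A₂ₙ⁽²⁾` the weight set of the level 1 perfect crystal
component `B(θ)` is `Λ = {±(αᵢ + ⋯ + α_{n-1} + (1/2)αₙ)} ∪ {±(1/2)αₙ} = {±eᵢ}`; hence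
`|B(θ)| = 2n` and the crystal graph of `B = B(θ) ⊔ {∅}`, with its 0-arrows, is a single
`(2n+1)`-cycle `x_θ →₁ x_{θ-α₁} →₂ ⋯ →ₙ x_{-(1/2)αₙ} →_{n-1} ⋯ →₁ x_{-θ} →₀ ∅ →₀ x_θ`. -/
theorem statement19 (n : ℕ) (hn : 0 < n) :
    -- θ = α₁ + ⋯ + α_{n-1} + (1/2)αₙ :
    A2theta n hn = A2suffix n hn ⟨0, hn⟩ ∧
    -- the weight set : Λ = {±(αᵢ + ⋯ + (1/2)αₙ)} = {±eᵢ} :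
    ({v | ∃ i : Fin n, v = A2suffix n hn i ∨ v = -A2suffix n hn i} =
      {v | ∃ i : Fin n, v = A2e n i ∨ v = -A2e n i}) ∧
    (Lpm (A2Lp n) = {v | ∃ i : Fin n, v = A2e n i ∨ v = -A2e n i}) ∧
    -- |B(θ)| = 2n :
    Set.ncard {b | b ∈ carrier (A2Lp n) (A2root n) ∧ b ≠ PC.empt} = 2 * n ∧
    -- the crystal graph is exactly the (2n+1)-cycle :
    (∀ (ii : Option (Fin n)) (p q : PC (EuclideanSpace ℝ (Fin n)) (Fin n)),
      fArrow (A2Lp n) (A2theta n hn) (A2root n) ii p q ↔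
        ∃ k < 2 * n + 1, ii = A2lab n k ∧ p = A2seq n k ∧ q = A2seq n ((k + 1) % (2 * n + 1))) := by
  refine ⟨(suffix_eq n hn ⟨0, hn⟩).symm, ?_, ?_, card_part n, ?_⟩
  · ext v
    simp only [Set.mem_setOf_eq, suffix_eq]
  · ext v
    exact mem_Lpm_iff v
  intro ii p q
  constructor
  · intro h
    rcases ii with _ | i <;> rcases p with a | jj | _ <;> rcases q with b | jj' | _ <;>
      try exact h.elim
    -- none, x a, x b : impossible
    · obtain ⟨ha, hb, heq, ha1, ha2, hb1, hb2⟩ := h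
      exfalso
      rcases (mem_Lpm_iff a).1 ha with ⟨j, rfl | rfl⟩ <;>
        rcases (mem_Lpm_iff b).1 hb with ⟨k0, rfl | rfl⟩
      · have hj : (j : ℕ) ≠ 0 := fun h0 => ha1 (by rw [show j = ⟨0, hn⟩ from Fin.ext h0]; rfl)
        have hk : (k0 : ℕ) ≠ 0 := fun h0 => hb1 (by rw [show k0 = ⟨0, hn⟩ from Fin.ext h0]; rfl)
        exact cls0 hn (Or.inl rfl) (Or.inl rfl) hj hk
          (by rw [one_smul, one_smul]; exact heq)
      · have hj : (j : ℕ) ≠ 0 := fun h0 => ha1 (by rw [show j = ⟨0, hn⟩ from Fin.ext h0]; rfl)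
        have hk : (k0 : ℕ) ≠ 0 := fun h0 => hb2
          (by rw [show k0 = ⟨0, hn⟩ from Fin.ext h0]; rfl)
        exact cls0 hn (Or.inl rfl) (Or.inr rfl) hj hk
          (by rw [one_smul, neg_one_smul]; exact heq)
      · have hj : (j : ℕ) ≠ 0 := fun h0 => ha2 (by rw [show j = ⟨0, hn⟩ from Fin.ext h0]; rfl)
        have hk : (k0 : ℕ) ≠ 0 := fun h0 => hb1 (by rw [show k0 = ⟨0, hn⟩ from Fin.ext h0]; rfl)
        exact cls0 hn (Or.inr rfl) (Or.inl rfl) hj hk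
          (by rw [neg_one_smul, one_smul]; exact heq)
      · have hj : (j : ℕ) ≠ 0 := fun h0 => ha2 (by rw [show j = ⟨0, hn⟩ from Fin.ext h0]; rfl)
        have hk : (k0 : ℕ) ≠ 0 := fun h0 => hb2
          (by rw [show k0 = ⟨0, hn⟩ from Fin.ext h0]; rfl)
        exact cls0 hn (Or.inr rfl) (Or.inr rfl) hj hk
          (by rw [neg_one_smul, neg_one_smul]; exact heq)
    -- none, x a, empt
    · have h' : a = -A2theta n hn := h
      refine ⟨2 * n - 1, by omega, ?_, ?_, ?_⟩
      · simp only [A2lab, dif_neg (show ¬(2 * n - 1 < n) by omega),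
          dif_neg (show ¬(2 * n - 1 < 2 * n - 1) by omega)]
      · rw [h']
        simp only [A2seq, dif_neg (show ¬(2 * n - 1 < n) by omega),
          dif_pos (show 2 * n - 1 < 2 * n by omega)]
        exact congrArg PC.x (congrArg Neg.neg (A2e_eq (show ((⟨0, hn⟩ : Fin n) : ℕ)
          = 2 * n - 1 - (2 * n - 1) by simp only [Fin.val_mk]; omega) (by omega)))
      · rw [Nat.mod_eq_of_lt (by omega)]
        simp only [A2seq, dif_neg (show ¬(2 * n - 1 + 1 < n) by omega),
          dif_neg (show ¬(2 * n - 1 + 1 < 2 * n) by omega)]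
    -- none, empt, x b
    · have h' : b = A2theta n hn := h
      refine ⟨2 * n, by omega, ?_, ?_, ?_⟩
      · simp only [A2lab, dif_neg (show ¬(2 * n < n) by omega),
          dif_neg (show ¬(2 * n < 2 * n - 1) by omega)]
      · simp only [A2seq, dif_neg (show ¬(2 * n < n) by omega),
          dif_neg (show ¬(2 * n < 2 * n) by omega)]
      · rw [Nat.mod_self, h']
        simp only [A2seq, dif_pos hn]
        exact congrArg PC.x (A2e_eq rfl hn)
    -- some i, x a, x b
    · obtain ⟨ha, hb, heq⟩ := h
      rcases (mem_Lpm_iff a).1 ha with ⟨j, rfl | rfl⟩ <;>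
        rcases (mem_Lpm_iff b).1 hb with ⟨k0, rfl | rfl⟩
      · obtain ⟨h1, hji, hki⟩ := cls1 heq
        refine ⟨(i : ℕ), by omega, ?_, ?_, ?_⟩
        · simp only [A2lab, dif_pos i.isLt]
        · simp only [A2seq, dif_pos i.isLt]
          exact congrArg PC.x (A2e_eq hji i.isLt)
        · rw [Nat.mod_eq_of_lt (by omega)]
          simp only [A2seq, dif_pos h1]
          exact congrArg PC.x (A2e_eq hki h1)
      · obtain ⟨h1, hji, hki⟩ := cls3 heq
        have hin : (i : ℕ) = n - 1 := by have := i.isLt; omega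
        refine ⟨(i : ℕ), by omega, ?_, ?_, ?_⟩
        · simp only [A2lab, dif_pos i.isLt]
        · simp only [A2seq, dif_pos i.isLt]
          exact congrArg PC.x (A2e_eq hji i.isLt)
        · rw [Nat.mod_eq_of_lt (by omega)]
          simp only [A2seq, dif_neg (show ¬((i : ℕ) + 1 < n) from h1),
            dif_pos (show (i : ℕ) + 1 < 2 * n by omega)]
          exact congrArg PC.x (congrArg Neg.neg
            (A2e_eq (show (k0 : ℕ) = 2 * n - 1 - ((i : ℕ) + 1) by omega) (by omega)))
      · exact (cls2 heq).elim
      · obtain ⟨h1, hji, hki⟩ := cls4 heq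
        refine ⟨2 * n - 2 - (i : ℕ), by omega, ?_, ?_, ?_⟩
        · simp only [A2lab, dif_neg (show ¬(2 * n - 2 - (i : ℕ) < n) by omega),
            dif_pos (show 2 * n - 2 - (i : ℕ) < 2 * n - 1 by omega)]
          exact congrArg some (Fin.ext (by simp; omega))
        · simp only [A2seq, dif_neg (show ¬(2 * n - 2 - (i : ℕ) < n) by omega),
            dif_pos (show 2 * n - 2 - (i : ℕ) < 2 * n by omega)]
          exact congrArg PC.x (congrArg Neg.neg
            (A2e_eq (show (j : ℕ) = 2 * n - 1 - (2 * n - 2 - (i : ℕ)) by omega) (by omega)))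
        · rw [Nat.mod_eq_of_lt (by omega)]
          simp only [A2seq, dif_neg (show ¬(2 * n - 2 - (i : ℕ) + 1 < n) by omega),
            dif_pos (show 2 * n - 2 - (i : ℕ) + 1 < 2 * n by omega)]
          exact congrArg PC.x (congrArg Neg.neg
            (A2e_eq (show (k0 : ℕ) = 2 * n - 1 - (2 * n - 2 - (i : ℕ) + 1) by omega) (by omega)))
    -- some i, x a, y j'
    · obtain ⟨-, -, hr⟩ := h
      exact ((root_not_mem' n i) hr).elim
    -- some i, y jj, x b
    · obtain ⟨-, -, hr⟩ := h
      exact ((root_not_mem' n i) hr).elim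
  · rintro ⟨k, hk, rfl, rfl, rfl⟩
    by_cases c1 : k + 1 < n
    · rw [Nat.mod_eq_of_lt (by omega)]
      simp only [A2lab, A2seq, dif_pos (show k < n by omega), dif_pos c1]
      refine ⟨mem_Lpm_e _, mem_Lpm_e _, ?_⟩
      rw [A2root, dif_pos (show ((⟨k, by omega⟩ : Fin n) : ℕ) + 1 < n from c1), sub_sub_cancel]
    · by_cases c2 : k < n
      · rw [Nat.mod_eq_of_lt (by omega)]
        simp only [A2lab, A2seq, dif_pos c2, dif_neg (show ¬(k + 1 < n) from c1),
          dif_pos (show k + 1 < 2 * n by omega)]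
        refine ⟨mem_Lpm_e _, mem_Lpm_neg_e _, ?_⟩
        rw [A2root, dif_neg (show ¬(((⟨k, c2⟩ : Fin n) : ℕ) + 1 < n) from c1), two_smul]
        rw [show A2e n ⟨2 * n - 1 - (k + 1), by omega⟩ = A2e n ⟨k, c2⟩ from
          A2e_eq (by simp; omega) c2]
        abel
      · by_cases c3 : k < 2 * n - 1
        · rw [Nat.mod_eq_of_lt (by omega)]
          simp only [A2lab, A2seq, dif_neg (show ¬(k < n) from c2), dif_pos c3,
            dif_pos (show k < 2 * n by omega), dif_neg (show ¬(k + 1 < n) by omega),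
            dif_pos (show k + 1 < 2 * n by omega)]
          refine ⟨mem_Lpm_neg_e _, mem_Lpm_neg_e _, ?_⟩
          rw [A2root, dif_pos (show ((⟨2 * n - 2 - k, by omega⟩ : Fin n) : ℕ) + 1 < n
            by simp; omega)]
          rw [show A2e n ⟨2 * n - 1 - (k + 1), by omega⟩
              = A2e n ⟨2 * n - 2 - k, by omega⟩ from A2e_eq (by simp; omega) (by omega),
            show A2e n ⟨((⟨2 * n - 2 - k, by omega⟩ : Fin n) : ℕ) + 1, by simp; omega⟩
              = A2e n ⟨2 * n - 1 - k, by omega⟩ from A2e_eq (by simp; omega) (by omega)]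
          abel
        · rcases (show k = 2 * n - 1 ∨ k = 2 * n by omega) with rfl | rfl
          · rw [Nat.mod_eq_of_lt (by omega)]
            simp only [A2lab, A2seq, dif_neg (show ¬(2 * n - 1 < n) by omega),
              dif_neg (show ¬(2 * n - 1 < 2 * n - 1) by omega),
              dif_pos (show 2 * n - 1 < 2 * n by omega),
              dif_neg (show ¬(2 * n - 1 + 1 < n) by omega),
              dif_neg (show ¬(2 * n - 1 + 1 < 2 * n) by omega)]
            show -A2e n ⟨2 * n - 1 - (2 * n - 1), by omega⟩ = -A2theta n hn
            exact congrArg Neg.neg (A2e_eq (by simp only [Fin.val_mk]; omega) hn)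
          · rw [show (2 * n + 1) % (2 * n + 1) = 0 from Nat.mod_self _]
            simp only [A2lab, A2seq, dif_neg (show ¬(2 * n < n) by omega),
              dif_neg (show ¬(2 * n < 2 * n - 1) by omega),
              dif_neg (show ¬(2 * n < 2 * n) by omega), dif_pos hn]
            show A2e n ⟨0, hn⟩ = A2theta n hn
            rfl

end LevelOnePerfect
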